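/- There exist functions a, x ∈ S(0,∞) such that K_u(a) = K_u(x) for every u > 0, while μ(t; a) < μ(t; x) for all t in a set of positive Lebesgue measure. Consequently, there is no additive map T on measurable functions satisfying ‖Th‖₀ ≤ ‖h‖₀ for all h ∈ L₀(0,∞) and ‖Th‖∞ ≤ ‖h‖∞ for all h ∈ L∞(0,∞) with Ta = x; that is, the unit ball of the K-orbit of a does not coincide with the unit ball of the orbit of a in the pair (L₀(0,∞), L∞(0,∞)). -/

import Mathlib

open MeasureTheory Filter Set
open scoped ENNReal NNReal

/-- Lebesgue measure on `(0, ∞)`. -/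
noncomputable def mLeb : Measure ℝ := volume.restrict (Set.Ioi (0:ℝ))

/-- The distribution function `d_f(s) = m {t ∈ (0,∞) : |f t| > s}`. -/
noncomputable def distFun (f : ℝ → ℝ) (s : ℝ) : ℝ≥0∞ := mLeb {t | s < |f t|}

/-- `f ∈ S(0,∞)`: `f` is measurable and `d_f(s) < ∞` for some `s > 0`. -/
def MemS (f : ℝ → ℝ) : Prop := Measurable f ∧ ∃ s > (0:ℝ), distFun f s < ⊤

/-- `‖g‖₀ = m (supp g)`, the `L₀`-group-norm. -/
noncomputable def norm0 (g : ℝ → ℝ) : ℝ≥0∞ := mLeb (Function.support g)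

/-- `‖h‖∞`, the essential supremum norm on `(0,∞)`. -/
noncomputable def normInf (h : ℝ → ℝ) : ℝ≥0∞ := eLpNorm h ⊤ mLeb

/-- `g ∈ L₀(0,∞)`: measurable with support of finite measure. -/
def MemL0 (g : ℝ → ℝ) : Prop := Measurable g ∧ norm0 g < ⊤

/-- `h ∈ L∞(0,∞)`: measurable and essentially bounded. -/
def MemLinf (h : ℝ → ℝ) : Prop := Measurable h ∧ normInf h < ⊤

/-- The K-functional `K_u(f) = inf {‖g‖₀ + u‖h‖∞ : f = g + h, g ∈ L₀, h ∈ L∞}`. -/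
noncomputable def Kfun (u : ℝ) (f : ℝ → ℝ) : ℝ≥0∞ :=
  ⨅ (g : ℝ → ℝ) (h : ℝ → ℝ) (_ : MemL0 g) (_ : MemLinf h) (_ : f = g + h),
    norm0 g + ENNReal.ofReal u * normInf h

/-- The decreasing rearrangement `μ(t; f) = inf {s ≥ 0 : d_f(s) ≤ t}`. -/
noncomputable def rearr (f : ℝ → ℝ) (t : ℝ) : ℝ :=
  sInf {s : ℝ | 0 ≤ s ∧ distFun f s ≤ ENNReal.ofReal t}

/-- The Δ-norm `‖f‖_S = inf_{s>0} [s + d_f(s)]`. -/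
noncomputable def normS (f : ℝ → ℝ) : ℝ≥0∞ :=
  ⨅ (s : ℝ) (_ : 0 < s), ENNReal.ofReal s + distFun f s

/-!
Take `a = (1 - t)₊` and `x = χ_(0,1]`. A decomposition `f = g + h` with `‖h‖∞ ≤ s` forces
`‖g‖₀ ≥ d_f(s)`, so `K_u(f) ≥ inf_{s ≥ 0} (d_f(s) + u s)`; since both `d_a(s) = 1 - s` and
`d_x(s) = 1` dominate `1 - s` on `[0, 1)`, this gives `K_u(a) = K_u(x) = min(1, u)`. Yet
`μ(t; a) = 1 - t < 1 = μ(t; x)` on `(0, 1)`. By the same decomposition, applied to `a` at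
height `1/2`, an additive map contracting `L₀` and `L∞` cannot raise the distribution function
of a nonnegative function, whereas `d_x(1/2) = 1 > 1/2 = d_a(1/2)`.
-/

lemma mLeb_eq_volume {s : Set ℝ} (hs : s ⊆ Ioi 0) : mLeb s = volume s :=
  Measure.restrict_eq_self _ hs

lemma norm0_eq_distFun_zero (f : ℝ → ℝ) : norm0 f = distFun f 0 := by
  simp only [norm0, distFun, Function.support, abs_pos]

lemma distFun_le_norm0 (f : ℝ → ℝ) {s : ℝ} (hs : 0 ≤ s) : distFun f s ≤ norm0 f := by
  rw [norm0_eq_distFun_zero]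
  exact measure_mono fun t ht => hs.trans_lt ht

lemma MemL0.memS {f : ℝ → ℝ} (hf : MemL0 f) : MemS f :=
  ⟨hf.1, 1, one_pos, (distFun_le_norm0 f zero_le_one).trans_lt hf.2⟩

lemma memL0_zero : MemL0 0 := ⟨measurable_zero, by simp [norm0]⟩

lemma memLinf_zero : MemLinf 0 := ⟨measurable_zero, by simp [normInf]⟩

lemma normInf_le_ofReal {h : ℝ → ℝ} {c : ℝ} (hb : ∀ t > 0, |h t| ≤ c) :
    normInf h ≤ ENNReal.ofReal c := by
  rw [normInf, eLpNorm_exponent_top]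
  exact eLpNormEssSup_le_of_ae_bound <| (ae_restrict_mem measurableSet_Ioi).mono fun t ht =>
    (Real.norm_eq_abs _).trans_le (hb t ht)

lemma distFun_eq_zero_of_normInf_le {h : ℝ → ℝ} {s : ℝ} (hs : 0 ≤ s)
    (hh : normInf h ≤ ENNReal.ofReal s) : distFun h s = 0 := by
  rw [normInf, eLpNorm_exponent_top] at hh
  have hbound : ∀ᵐ t ∂mLeb, |h t| ≤ s := ae_le_eLpNormEssSup.mono fun t ht => by
    rw [Real.enorm_eq_ofReal_abs] at ht
    exact (ENNReal.ofReal_le_ofReal_iff hs).mp (ht.trans hh)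
  simpa only [distFun, ae_iff, not_le] using hbound

lemma distFun_add_le (g h : ℝ → ℝ) (s : ℝ) : distFun (g + h) s ≤ norm0 g + distFun h s := by
  refine (measure_mono fun t ht => ?_).trans (measure_union_le (Function.support g) _)
  by_cases hg : g t = 0
  · right
    simpa [hg] using ht
  · exact Or.inl hg

lemma distFun_add_le_norm0 {g h : ℝ → ℝ} {s : ℝ} (hs : 0 ≤ s)
    (hh : normInf h ≤ ENNReal.ofReal s) : distFun (g + h) s ≤ norm0 g := by
  simpa [distFun_eq_zero_of_normInf_le hs hh] using distFun_add_le g h s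

lemma Kfun_le {u : ℝ} {f g h : ℝ → ℝ} (hg : MemL0 g) (hh : MemLinf h) (hfgh : f = g + h) :
    Kfun u f ≤ norm0 g + ENNReal.ofReal u * normInf h :=
  iInf_le_of_le g <| iInf_le_of_le h <| iInf_le_of_le hg <| iInf_le_of_le hh <|
    iInf_le_of_le hfgh le_rfl

lemma Kfun_le_norm0 (u : ℝ) {f : ℝ → ℝ} (hf : MemL0 f) : Kfun u f ≤ norm0 f := by
  simpa [normInf] using Kfun_le (u := u) hf memLinf_zero (add_zero f).symm

lemma Kfun_le_mul_normInf (u : ℝ) {f : ℝ → ℝ} (hf : MemLinf f) :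
    Kfun u f ≤ ENNReal.ofReal u * normInf f := by
  simpa [norm0] using Kfun_le (u := u) memL0_zero hf (zero_add f).symm

/-- The easy half of `K_u(f) = inf_{s ≥ 0} (d_f(s) + u s)`. -/
lemma le_Kfun {u : ℝ} {f : ℝ → ℝ} {c : ℝ≥0∞}
    (hc : ∀ s, 0 ≤ s → c ≤ distFun f s + ENNReal.ofReal u * ENNReal.ofReal s) :
    c ≤ Kfun u f := by
  refine le_iInf fun g => le_iInf fun h => le_iInf fun _ => le_iInf fun hh => le_iInf fun hfgh => ?_
  obtain ⟨s, hs, hhs⟩ : ∃ s, 0 ≤ s ∧ normInf h = ENNReal.ofReal s :=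
    ⟨_, ENNReal.toReal_nonneg, (ENNReal.ofReal_toReal hh.2.ne).symm⟩
  calc c ≤ distFun f s + ENNReal.ofReal u * ENNReal.ofReal s := hc s hs
    _ ≤ norm0 g + ENNReal.ofReal u * normInf h := by
        rw [hhs, hfgh]
        gcongr
        exact distFun_add_le_norm0 hs hhs.le

lemma min_one_le_Kfun {u : ℝ} {f : ℝ → ℝ}
    (hf : ∀ s, 0 ≤ s → s < 1 → ENNReal.ofReal (1 - s) ≤ distFun f s) :
    min 1 (ENNReal.ofReal u) ≤ Kfun u f := by
  refine le_Kfun fun s hs => ?_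
  rcases lt_or_ge s 1 with hs1 | hs1
  · calc min 1 (ENNReal.ofReal u) = ENNReal.ofReal (min 1 u) := by simp
      _ ≤ ENNReal.ofReal (1 - s + u * s) := by
        gcongr
        rcases le_total u 1 with hu | hu
        · exact (min_le_right _ _).trans (by nlinarith)
        · exact (min_le_left _ _).trans (by nlinarith)
      _ ≤ ENNReal.ofReal (1 - s) + ENNReal.ofReal u * ENNReal.ofReal s := by
        rw [← ENNReal.ofReal_mul' hs]
        exact ENNReal.ofReal_add_le
      _ ≤ distFun f s + ENNReal.ofReal u * ENNReal.ofReal s := by gcongr; exact hf s hs hs1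
  · calc min 1 (ENNReal.ofReal u) ≤ ENNReal.ofReal u * 1 := by simp
      _ ≤ ENNReal.ofReal u * ENNReal.ofReal s := by gcongr; exact ENNReal.one_le_ofReal.mpr hs1
      _ ≤ distFun f s + ENNReal.ofReal u * ENNReal.ofReal s := le_add_self

lemma Kfun_eq_min_one {u : ℝ} {f : ℝ → ℝ} (hf : Measurable f) (hsupp : norm0 f ≤ 1)
    (hbdd : ∀ t > 0, |f t| ≤ 1)
    (hdist : ∀ s, 0 ≤ s → s < 1 → ENNReal.ofReal (1 - s) ≤ distFun f s) :
    Kfun u f = min 1 (ENNReal.ofReal u) := by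
  have hinf : normInf f ≤ 1 := by simpa using normInf_le_ofReal hbdd
  refine le_antisymm (le_min ?_ ?_) (min_one_le_Kfun hdist)
  · exact (Kfun_le_norm0 u ⟨hf, hsupp.trans_lt ENNReal.one_lt_top⟩).trans hsupp
  · calc Kfun u f ≤ ENNReal.ofReal u * normInf f :=
          Kfun_le_mul_normInf u ⟨hf, hinf.trans_lt ENNReal.one_lt_top⟩
      _ ≤ ENNReal.ofReal u := mul_le_of_le_one_right' hinf

lemma rearr_le {f : ℝ → ℝ} {s t : ℝ} (hs : 0 ≤ s) (hst : distFun f s ≤ ENNReal.ofReal t) :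
    rearr f t ≤ s :=
  csInf_le ⟨0, fun _ h => h.1⟩ ⟨hs, hst⟩

lemma le_rearr {f : ℝ → ℝ} {c t : ℝ} (hne : ∃ s, 0 ≤ s ∧ distFun f s ≤ ENNReal.ofReal t)
    (hc : ∀ s, 0 ≤ s → s < c → ENNReal.ofReal t < distFun f s) : c ≤ rearr f t :=
  le_csInf hne fun s ⟨hs, hst⟩ => not_lt.mp fun hsc => (hc s hs hsc).not_ge hst

/-- Split `f` at height `c` as `(f - c)₊ + min f c`. -/
lemma distFun_le_of_contraction {T : (ℝ → ℝ) → ℝ → ℝ} (hadd : ∀ f g, T (f + g) = T f + T g)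
    (hT0 : ∀ h, MemL0 h → norm0 (T h) ≤ norm0 h)
    (hTinf : ∀ h, MemLinf h → normInf (T h) ≤ normInf h)
    {f : ℝ → ℝ} (hf : Measurable f) (hf0 : ∀ t, 0 ≤ f t) {c : ℝ} (hc : 0 ≤ c) :
    distFun (T f) c ≤ distFun f c := by
  rcases eq_or_ne (distFun f c) ⊤ with htop | htop
  · exact htop ▸ le_top
  set g : ℝ → ℝ := fun t => max (f t - c) 0
  set h : ℝ → ℝ := fun t => min (f t) c
  have hfgh : f = g + h := funext fun t => by
    rcases le_total (f t) c with hft | hft <;> simp [g, h, hft]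
  have hg : norm0 g ≤ distFun f c := measure_mono fun t ht => by
    have : c < f t := by by_contra! hft; exact ht (max_eq_right (by linarith))
    exact this.trans_le (le_abs_self _)
  have hh : normInf h ≤ ENNReal.ofReal c := normInf_le_ofReal fun t _ => by
    rw [abs_of_nonneg (le_min (hf0 t) hc)]
    exact min_le_right _ _
  calc distFun (T f) c = distFun (T g + T h) c := by rw [hfgh, hadd]
    _ ≤ norm0 (T g) :=
        distFun_add_le_norm0 hc <| (hTinf h ⟨hf.min measurable_const, hh.trans_lt (by simp)⟩).trans hh
    _ ≤ distFun f c :=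
        (hT0 g ⟨(hf.sub measurable_const).max measurable_const, hg.trans_lt htop.lt_top⟩).trans hg

noncomputable def ramp : ℝ → ℝ := fun t => max (1 - t) 0

noncomputable def box : ℝ → ℝ := (Ioc 0 1).indicator 1

lemma measurable_ramp : Measurable ramp := (measurable_const.sub measurable_id).max measurable_const

lemma measurable_box : Measurable box := measurable_const.indicator measurableSet_Ioc

lemma ramp_nonneg (t : ℝ) : 0 ≤ ramp t := le_max_right _ _

lemma abs_box_le_one (t : ℝ) : |box t| ≤ 1 := by
  by_cases ht : t ∈ Ioc 0 1 <;> simp [box, ht]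

lemma distFun_ramp {s : ℝ} (hs : 0 ≤ s) : distFun ramp s = ENNReal.ofReal (1 - s) := by
  have hset : {t | s < |ramp t|} ∩ Ioi 0 = Ioo 0 (1 - s) := by
    ext t
    simp only [ramp, mem_inter_iff, mem_ofPred_eq, mem_Ioi, mem_Ioo,
      abs_of_nonneg (le_max_right (1 - t) 0), lt_max_iff]
    constructor
    · rintro ⟨h | h, ht⟩ <;> constructor <;> linarith
    · rintro ⟨ht, h⟩; exact ⟨Or.inl (by linarith), ht⟩
  rw [distFun, mLeb, Measure.restrict_apply' measurableSet_Ioi, hset, Real.volume_Ioo, sub_zero]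

lemma distFun_box_of_lt_one {s : ℝ} (hs : 0 ≤ s) (hs1 : s < 1) : distFun box s = 1 := by
  have hset : {t | s < |box t|} = Ioc 0 1 := by
    ext t
    by_cases ht : t ∈ Ioc 0 1 <;> simp [box, ht, hs1, hs.not_gt]
  rw [distFun, hset, mLeb_eq_volume Ioc_subset_Ioi_self, Real.volume_Ioc]
  simp

lemma distFun_box_of_one_le {s : ℝ} (hs : 1 ≤ s) : distFun box s = 0 := by
  have hset : {t | s < |box t|} = ∅ :=
    eq_empty_of_forall_notMem fun t ht => (abs_box_le_one t).not_gt (hs.trans_lt ht)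
  rw [distFun, hset, measure_empty]

lemma memL0_ramp : MemL0 ramp :=
  ⟨measurable_ramp, by simp [norm0_eq_distFun_zero, distFun_ramp]⟩

lemma memL0_box : MemL0 box :=
  ⟨measurable_box, by simp [norm0_eq_distFun_zero, distFun_box_of_lt_one]⟩

lemma Kfun_ramp (u : ℝ) : Kfun u ramp = min 1 (ENNReal.ofReal u) :=
  Kfun_eq_min_one measurable_ramp (by simp [norm0_eq_distFun_zero, distFun_ramp])
    (fun t ht => by rw [abs_of_nonneg (ramp_nonneg t)]; exact max_le (by linarith) zero_le_one)
    fun s hs _ => (distFun_ramp hs).ge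

lemma Kfun_box (u : ℝ) : Kfun u box = min 1 (ENNReal.ofReal u) :=
  Kfun_eq_min_one measurable_box (by simp [norm0_eq_distFun_zero, distFun_box_of_lt_one])
    (fun t _ => abs_box_le_one t)
    fun s hs hs1 => by simp [distFun_box_of_lt_one hs hs1, hs]

lemma rearr_ramp_lt_rearr_box {t : ℝ} (ht : t ∈ Ioo 0 1) : rearr ramp t < rearr box t := by
  have hramp : rearr ramp t ≤ 1 - t :=
    rearr_le (by linarith [ht.2]) (by rw [distFun_ramp (by linarith [ht.2]), sub_sub_cancel])
  have hbox : 1 ≤ rearr box t :=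
    le_rearr ⟨1, zero_le_one, by simp [distFun_box_of_one_le le_rfl]⟩ fun s hs hs1 => by
      simpa [distFun_box_of_lt_one hs hs1] using ht.2
  linarith [ht.1]

/-- there exist `a, x ∈ S(0,∞)` with the same K-functionals,
with `μ(·; a) < μ(·; x)` on a set of positive measure; consequently no additive
map `T` with `‖T‖_{L₀→L₀} ≤ 1` and `‖T‖_{L∞→L∞} ≤ 1` carries `a` to `x`:
the unit ball of the K-orbit of `a` differs from the unit ball of its orbit. -/
theorem stmt11 :
    ∃ a x : ℝ → ℝ, MemS a ∧ MemS x ∧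
      (∀ u > (0:ℝ), Kfun u a = Kfun u x) ∧
      (∃ E : Set ℝ, MeasurableSet E ∧ 0 < mLeb E ∧ ∀ t ∈ E, rearr a t < rearr x t) ∧
      ¬ ∃ T : (ℝ → ℝ) → (ℝ → ℝ),
          (∀ f g : ℝ → ℝ, T (f + g) = T f + T g) ∧
          (∀ f : ℝ → ℝ, Measurable f → Measurable (T f)) ∧
          (∀ h : ℝ → ℝ, MemL0 h → norm0 (T h) ≤ norm0 h) ∧
          (∀ h : ℝ → ℝ, MemLinf h → normInf (T h) ≤ normInf h) ∧
          T a = x := by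
  refine ⟨ramp, box, memL0_ramp.memS, memL0_box.memS, fun u _ => by rw [Kfun_ramp, Kfun_box],
    ⟨Ioo 0 1, measurableSet_Ioo, ?_, fun t ht => rearr_ramp_lt_rearr_box ht⟩, ?_⟩
  · rw [mLeb_eq_volume Ioo_subset_Ioi_self, Real.volume_Ioo]
    norm_num
  · rintro ⟨T, hadd, -, hT0, hTinf, hTa⟩
    have h := distFun_le_of_contraction hadd hT0 hTinf measurable_ramp ramp_nonneg
      (c := 1 / 2) (by norm_num)
    rw [hTa, distFun_box_of_lt_one (by norm_num) (by norm_num), distFun_ramp (by norm_num)] at h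
    norm_num at h
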